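/- For any finite simple graphs G₁, …, G_ℓ, the Shannon capacity satisfies Θ(G₁ ⊠ ⋯ ⊠ G_ℓ) ≤ (Θ(G₁ + ⋯ + G_ℓ)/ℓ)^ℓ. -/

import Mathlib

/-!
Fix `m` and put `N = ℓ m`. For every map `p : Fin N → Fin ℓ` with all fibres of size `m`,
choose a bijection `e : Fin N ≃ Fin ℓ × Fin m` over `p`; sending `x` to the word whose letter
`t` is the `(e t).2`-th coordinate of `x` in the factor `G_{p t}` maps `(G₁ ⊠ ⋯ ⊠ G_ℓ)^m` into
`(G₁ + ⋯ + G_ℓ)^N`, and copies belonging to different `p` are never adjacent. As there are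
`N! / (m!)^ℓ` such `p`, this gives `N! / (m!)^ℓ · α((⊠G)^m) ≤ α((+G)^N) ≤ Θ(+G)^N`.
The central multinomial coefficient `N! / (m!)^ℓ` is the largest of the at most `(N + 1)^ℓ`
terms of the expansion of `ℓ^N = (1 + ⋯ + 1)^N` (log-convexity of `Γ`), so
`α((⊠G)^m) ≤ (N + 1)^ℓ ((Θ(+G) / ℓ)^ℓ)^m`. Supermultiplicativity of `α` under strong powers
removes the polynomial factor.
-/

namespace Paper

def strongProd {V W : Type*} (G : SimpleGraph V) (H : SimpleGraph W) : SimpleGraph (V × W) :=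
  SimpleGraph.fromRel (fun x y =>
    (x.1 = y.1 ∨ G.Adj x.1 y.1) ∧ (x.2 = y.2 ∨ H.Adj x.2 y.2))

def strongPow {V : Type*} (G : SimpleGraph V) (k : ℕ) : SimpleGraph (Fin k → V) :=
  SimpleGraph.fromRel (fun x y => ∀ i, x i = y i ∨ G.Adj (x i) (y i))

noncomputable def indepNum {V : Type*} [Fintype V] (G : SimpleGraph V) : ℕ :=
  sSup {n | ∃ s : Finset V, (∀ a ∈ s, ∀ b ∈ s, a ≠ b → ¬ G.Adj a b) ∧ s.card = n}

noncomputable def shannonCapacity {V : Type*} [Fintype V] (G : SimpleGraph V) : ℝ :=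
  ⨆ k : ℕ, (indepNum (strongPow G (k + 1)) : ℝ) ^ ((1 : ℝ) / (k + 1))

noncomputable def lovaszTheta {V : Type*} [Fintype V] (G : SimpleGraph V) : ℝ :=
  sSup {x : ℝ | ∃ B : Matrix V V ℝ, B.PosSemidef ∧ B.trace = 1 ∧
    (∀ i j, G.Adj i j → B i j = 0) ∧ x = ∑ i, ∑ j, B i j}

noncomputable def fracIndepNum {V : Type*} [Fintype V] (G : SimpleGraph V) : ℝ :=
  sSup {x : ℝ | ∃ f : V → ℝ, (∀ v, 0 ≤ f v) ∧
    (∀ s : Finset V, G.IsClique (s : Set V) → ∑ v ∈ s, f v ≤ 1) ∧ x = ∑ v, f v}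

def Universal {V : Type*} [Fintype V] (G : SimpleGraph V) : Prop :=
  ∀ (W : Type) [Fintype W] (H : SimpleGraph W),
    indepNum (strongProd G H) = indepNum G * indepNum H

def sigmaUnion {ι : Type*} {V : ι → Type*} (G : ∀ i, SimpleGraph (V i)) :
    SimpleGraph (Σ i, V i) :=
  SimpleGraph.fromRel (fun x y =>
    ∃ i, ∃ a b : V i, (G i).Adj a b ∧ x = ⟨i, a⟩ ∧ y = ⟨i, b⟩)

def piStrongProd {ι : Type*} {V : ι → Type*} (G : ∀ i, SimpleGraph (V i)) :
    SimpleGraph (∀ i, V i) :=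
  SimpleGraph.fromRel (fun x y => ∀ i, x i = y i ∨ (G i).Adj (x i) (y i))

def tadpole (k l : ℕ) : SimpleGraph (Fin (k + l)) :=
  SimpleGraph.fromRel (fun x y =>
    ((x : ℕ) < k ∧ (y : ℕ) < k ∧ ((x : ℕ) + 1) % k = (y : ℕ)) ∨
    (k ≤ (x : ℕ) ∧ (y : ℕ) = (x : ℕ) + 1) ∨
    ((x : ℕ) = 0 ∧ (y : ℕ) = k))


open Finset Filter

section ClosedAdjacency

lemma eq_or_fromRel_adj_iff {V : Type*} {r : V → V → Prop} (hrefl : ∀ x, r x x)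
    (hsymm : ∀ x y, r x y → r y x) {x y : V} :
    x = y ∨ (SimpleGraph.fromRel r).Adj x y ↔ r x y := by
  rw [SimpleGraph.fromRel_adj]
  constructor
  · rintro (rfl | ⟨-, h | h⟩)
    exacts [hrefl x, h, hsymm y x h]
  · intro h
    by_cases hxy : x = y
    exacts [Or.inl hxy, Or.inr ⟨hxy, Or.inl h⟩]

lemma eq_or_piStrongProd_adj_iff {ι : Type*} {V : ι → Type*} (G : ∀ i, SimpleGraph (V i))
    {x y : ∀ i, V i} :
    x = y ∨ (piStrongProd G).Adj x y ↔ ∀ i, x i = y i ∨ (G i).Adj (x i) (y i) :=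
  eq_or_fromRel_adj_iff (fun _ _ => Or.inl rfl)
    (fun _ _ h i => (h i).imp Eq.symm SimpleGraph.Adj.symm)

lemma eq_or_strongPow_adj_iff {V : Type*} (G : SimpleGraph V) (k : ℕ) {x y : Fin k → V} :
    x = y ∨ (strongPow G k).Adj x y ↔ ∀ i, x i = y i ∨ G.Adj (x i) (y i) :=
  eq_or_piStrongProd_adj_iff fun _ => G

lemma eq_or_strongProd_adj_iff {V W : Type*} (G : SimpleGraph V) (H : SimpleGraph W)
    {x y : V × W} :
    x = y ∨ (strongProd G H).Adj x y ↔
      (x.1 = y.1 ∨ G.Adj x.1 y.1) ∧ (x.2 = y.2 ∨ H.Adj x.2 y.2) :=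
  eq_or_fromRel_adj_iff (fun _ => ⟨Or.inl rfl, Or.inl rfl⟩)
    (fun _ _ h => ⟨h.1.imp Eq.symm SimpleGraph.Adj.symm, h.2.imp Eq.symm SimpleGraph.Adj.symm⟩)

lemma fst_eq_of_eq_or_sigmaUnion_adj {ι : Type*} {V : ι → Type*} {G : ∀ i, SimpleGraph (V i)}
    {x y : Σ i, V i} (h : x = y ∨ (sigmaUnion G).Adj x y) : x.1 = y.1 := by
  rcases h with rfl | ⟨-, ⟨i, a, b, -, rfl, rfl⟩ | ⟨i, a, b, -, rfl, rfl⟩⟩ <;> rfl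

lemma eq_or_adj_of_eq_or_sigmaUnion_adj {ι : Type*} {V : ι → Type*} {G : ∀ i, SimpleGraph (V i)}
    {i : ι} {a b : V i} (h : (⟨i, a⟩ : Σ i, V i) = ⟨i, b⟩ ∨ (sigmaUnion G).Adj ⟨i, a⟩ ⟨i, b⟩) :
    a = b ∨ (G i).Adj a b := by
  rcases h with h | ⟨-, ⟨j, c, d, hcd, hx, hy⟩ | ⟨j, c, d, hcd, hx, hy⟩⟩
  · exact Or.inl (eq_of_heq (Sigma.mk.inj h).2)
  all_goals
    obtain ⟨rfl, hc⟩ := Sigma.mk.inj hx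
    obtain ⟨-, hd⟩ := Sigma.mk.inj hy
    cases eq_of_heq hc
    cases eq_of_heq hd
  exacts [Or.inr hcd, Or.inr hcd.symm]

end ClosedAdjacency

section IndependenceNumber

lemma _root_.SimpleGraph.IsIndepSet.eq_of_eq_or_adj {V : Type*} {G : SimpleGraph V} {s : Set V}
    (hs : G.IsIndepSet s) {x y : V} (hx : x ∈ s) (hy : y ∈ s) (h : x = y ∨ G.Adj x y) :
    x = y :=
  h.elim id fun hadj => by_contra fun hne => hs hx hy hne hadj

variable {V W : Type*} [Fintype V] [Fintype W]

lemma indepNum_eq_indepNum (G : SimpleGraph V) : indepNum G = G.indepNum := by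
  simp only [indepNum, SimpleGraph.indepNum, SimpleGraph.isNIndepSet_iff,
    SimpleGraph.isIndepSet_iff, Set.Pairwise, Finset.mem_coe]

lemma indepNum_le_card (G : SimpleGraph V) : indepNum G ≤ Fintype.card V := by
  obtain ⟨s, hs⟩ := G.exists_isNIndepSet_indepNum
  rw [indepNum_eq_indepNum, ← hs.card_eq]
  exact s.card_le_univ

lemma indepNum_le_of_reflect {G : SimpleGraph V} {H : SimpleGraph W} (f : V → W)
    (hf : ∀ x y, f x = f y ∨ H.Adj (f x) (f y) → x = y ∨ G.Adj x y) :
    indepNum G ≤ indepNum H := by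
  classical
  obtain ⟨s, hs⟩ := G.exists_isNIndepSet_indepNum
  have hinj : Set.InjOn f s := fun x hx y hy hxy =>
    hs.isIndepSet.eq_of_eq_or_adj hx hy (hf x y (Or.inl hxy))
  have hindep : H.IsIndepSet (s.image f : Set W) := by
    simp only [Finset.coe_image]
    rintro _ ⟨x, hx, rfl⟩ _ ⟨y, hy, rfl⟩ hne hadj
    exact hne (congrArg f (hs.isIndepSet.eq_of_eq_or_adj hx hy (hf x y (Or.inr hadj))))
  rw [indepNum_eq_indepNum, indepNum_eq_indepNum, ← hs.card_eq, ← card_image_of_injOn hinj]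
  exact hindep.card_le_indepNum

lemma indepNum_mul_le_indepNum_strongProd (G : SimpleGraph V) (H : SimpleGraph W) :
    indepNum G * indepNum H ≤ indepNum (strongProd G H) := by
  obtain ⟨s, hs⟩ := G.exists_isNIndepSet_indepNum
  obtain ⟨t, ht⟩ := H.exists_isNIndepSet_indepNum
  have hindep : (strongProd G H).IsIndepSet ((s ×ˢ t : Finset (V × W)) : Set (V × W)) := by
    rintro x hx y hy hne hadj
    simp only [Finset.mem_coe, Finset.mem_product] at hx hy
    obtain ⟨h1, h2⟩ := (eq_or_strongProd_adj_iff G H).1 (Or.inr hadj)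
    exact hne (Prod.ext (hs.isIndepSet.eq_of_eq_or_adj hx.1 hy.1 h1)
      (ht.isIndepSet.eq_of_eq_or_adj hx.2 hy.2 h2))
  rw [indepNum_eq_indepNum, indepNum_eq_indepNum, indepNum_eq_indepNum, ← hs.card_eq,
    ← ht.card_eq, ← card_product]
  exact hindep.card_le_indepNum

lemma prod_indepNum_le_indepNum_piStrongProd {ι : Type*} [Fintype ι] [DecidableEq ι]
    {V : ι → Type*} [∀ i, Fintype (V i)] (G : ∀ i, SimpleGraph (V i)) :
    ∏ i, indepNum (G i) ≤ indepNum (piStrongProd G) := by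
  choose s hs using fun i => (G i).exists_isNIndepSet_indepNum
  have hindep : (piStrongProd G).IsIndepSet (Fintype.piFinset s : Set (∀ i, V i)) := by
    rintro x hx y hy hne hadj
    simp only [Finset.mem_coe, Fintype.mem_piFinset] at hx hy
    have h := (eq_or_piStrongProd_adj_iff G).1 (Or.inr hadj)
    exact hne (funext fun i => (hs i).isIndepSet.eq_of_eq_or_adj (hx i) (hy i) (h i))
  simp only [indepNum_eq_indepNum, ← fun i => (hs i).card_eq, ← Fintype.card_piFinset]
  exact hindep.card_le_indepNum

variable (V) in
lemma card_le_indepNum_bot :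
    Fintype.card V ≤ indepNum (⊥ : SimpleGraph V) := by
  have hindep : (⊥ : SimpleGraph V).IsIndepSet ((univ : Finset V) : Set V) :=
    fun _ _ _ _ _ h => h
  rw [indepNum_eq_indepNum, ← Finset.card_univ]
  exact hindep.card_le_indepNum

lemma indepNum_strongPow_pow_le (G : SimpleGraph V) (k n : ℕ) :
    indepNum (strongPow G k) ^ n ≤ indepNum (strongPow G (n * k)) := by
  calc indepNum (strongPow G k) ^ n = ∏ _j : Fin n, indepNum (strongPow G k) := by simp
    _ ≤ indepNum (piStrongProd fun _ : Fin n => strongPow G k) :=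
      prod_indepNum_le_indepNum_piStrongProd _
    _ ≤ indepNum (strongPow G (n * k)) := by
      refine indepNum_le_of_reflect (fun x t => x (finProdFinEquiv.symm t).1
        (finProdFinEquiv.symm t).2) fun x y hxy => ?_
      rw [eq_or_strongPow_adj_iff] at hxy
      refine (eq_or_piStrongProd_adj_iff _).2 fun j => (eq_or_strongPow_adj_iff G k).2 fun s => ?_
      simpa using hxy (finProdFinEquiv (j, s))

end IndependenceNumber

lemma le_of_eventually_pow_le_mul_pow {x c C : ℝ} {k : ℕ} (hc : 0 ≤ c)
    (h : ∀ᶠ n : ℕ in atTop, x ^ n ≤ C * n ^ k * c ^ n) : x ≤ c := by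
  by_contra! hcx
  have hx : 0 < x := hc.trans_lt hcx
  have hr : |c / x| < 1 := by
    rw [abs_of_nonneg (div_nonneg hc hx.le)]
    exact (div_lt_one hx).2 hcx
  have hsmall : ∀ᶠ n : ℕ in atTop, C * ((n : ℝ) ^ k * (c / x) ^ n) < 1 := by
    have := (tendsto_pow_const_mul_const_pow_of_abs_lt_one k hr).const_mul C
    rw [mul_zero] at this
    exact this.eventually (gt_mem_nhds one_pos)
  obtain ⟨n, hn, hn'⟩ := (h.and hsmall).exists
  have hrewrite : C * n ^ k * c ^ n = C * ((n : ℝ) ^ k * (c / x) ^ n) * x ^ n := by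
    rw [div_pow]
    field_simp
  rw [hrewrite] at hn
  exact (mul_lt_of_lt_one_left (pow_pos hx n) hn').not_ge hn

lemma rpow_one_div_succ_le_iff {a b : ℝ} (ha : 0 ≤ a) (hb : 0 ≤ b) (k : ℕ) :
    a ^ ((1 : ℝ) / (k + 1)) ≤ b ↔ a ≤ b ^ (k + 1) := by
  rw [one_div, Real.rpow_inv_le_iff_of_pos ha hb (by positivity), ← Real.rpow_natCast]
  push_cast
  rfl

section ShannonCapacity

variable {V : Type*} [Fintype V] (G : SimpleGraph V)

lemma indepNum_strongPow_le_card_pow (k : ℕ) :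
    indepNum (strongPow G k) ≤ Fintype.card V ^ k := by
  simpa using indepNum_le_card (strongPow G k)

lemma shannonCapacity_nonneg : 0 ≤ shannonCapacity G :=
  Real.iSup_nonneg fun _ => Real.rpow_nonneg (Nat.cast_nonneg _) _

lemma bddAbove_range_indepNum_strongPow_rpow :
    BddAbove (Set.range fun k : ℕ => (indepNum (strongPow G (k + 1)) : ℝ) ^ ((1 : ℝ) / (k + 1))) :=
  ⟨Fintype.card V, by
    rintro _ ⟨k, rfl⟩
    rw [rpow_one_div_succ_le_iff (Nat.cast_nonneg _) (Nat.cast_nonneg _)]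
    exact_mod_cast indepNum_strongPow_le_card_pow G (k + 1)⟩

lemma indepNum_strongPow_le_shannonCapacity_pow (N : ℕ) :
    (indepNum (strongPow G N) : ℝ) ≤ shannonCapacity G ^ N := by
  cases N with
  | zero => simpa using indepNum_strongPow_le_card_pow G 0
  | succ k =>
    exact (rpow_one_div_succ_le_iff (Nat.cast_nonneg _) (shannonCapacity_nonneg G) k).1
      (le_ciSup (bddAbove_range_indepNum_strongPow_rpow G) k)

lemma shannonCapacity_le_of_eventually_indepNum_le {c C : ℝ} {k : ℕ} (hc : 0 ≤ c)
    (h : ∀ᶠ N : ℕ in atTop, (indepNum (strongPow G N) : ℝ) ≤ C * N ^ k * c ^ N) :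
    shannonCapacity G ≤ c := by
  refine ciSup_le fun j => ?_
  rw [rpow_one_div_succ_le_iff (Nat.cast_nonneg _) hc]
  refine le_of_eventually_pow_le_mul_pow (C := C * (j + 1 : ℕ) ^ k) (k := k) (pow_nonneg hc _) ?_
  have hmul : Tendsto (fun n : ℕ => n * (j + 1)) atTop atTop :=
    tendsto_id.atTop_mul_const' j.succ_pos
  filter_upwards [hmul.eventually h] with n hn
  calc (indepNum (strongPow G (j + 1)) : ℝ) ^ n ≤ indepNum (strongPow G (n * (j + 1))) := by
        exact_mod_cast indepNum_strongPow_pow_le G (j + 1) n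
    _ ≤ C * ((n * (j + 1) : ℕ) : ℝ) ^ k * c ^ (n * (j + 1)) := hn
    _ = C * (j + 1 : ℕ) ^ k * n ^ k * (c ^ (j + 1)) ^ n := by
        rw [Nat.cast_mul, mul_pow, pow_mul']
        ring

end ShannonCapacity

section Counting

open Nat

lemma factorial_pow_card_le_prod_factorial {ι : Type*} {s : Finset ι} {k : ι → ℕ} {m : ℕ}
    (h : ∑ i ∈ s, k i = #s * m) : m ! ^ #s ≤ ∏ i ∈ s, (k i)! := by
  rcases s.eq_empty_or_nonempty with rfl | hs
  · simp
  have hcard : (0 : ℝ) < #s := by exact_mod_cast hs.card_pos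
  have hmean : ∑ i ∈ s, (#s : ℝ)⁻¹ • ((k i : ℝ) + 1) = m + 1 := by
    rw [← smul_sum, sum_add_distrib, sum_const, nsmul_eq_mul, mul_one, ← Nat.cast_sum, h,
      smul_eq_mul]
    field_simp
    push_cast
    ring
  have hjensen := Real.convexOn_log_Gamma.map_sum_le (t := s) (w := fun _ => (#s : ℝ)⁻¹)
    (p := fun i => (k i : ℝ) + 1) (fun _ _ => by positivity) (by simp [hcard.ne'])
    (fun i _ => by simp only [Set.mem_Ioi]; positivity)
  rw [hmean] at hjensen
  simp only [Function.comp_apply, Real.Gamma_nat_eq_factorial, smul_eq_mul,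
    ← mul_sum] at hjensen
  rw [inv_mul_eq_div, le_div_iff₀ hcard, mul_comm, ← Real.log_pow,
    ← Real.log_prod (fun i _ => by positivity)] at hjensen
  exact_mod_cast (Real.log_le_log_iff (by positivity) (by positivity)).1 hjensen

lemma pow_mul_factorial_pow_le (ℓ m : ℕ) :
    ℓ ^ (ℓ * m) * m ! ^ ℓ ≤ (ℓ * m + 1) ^ ℓ * (ℓ * m)! := by
  set A := piAntidiag (univ : Finset (Fin ℓ)) (ℓ * m)
  have hmultinomial : ℓ ^ (ℓ * m) = ∑ k ∈ A, multinomial univ k := by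
    simpa using sum_pow_eq_sum_piAntidiag (univ : Finset (Fin ℓ)) (fun _ => (1 : ℕ)) (ℓ * m)
  have hterm : ∀ k ∈ A, multinomial univ k * m ! ^ ℓ ≤ (ℓ * m)! := by
    intro k hk
    have hsum : ∑ i, k i = ℓ * m := (mem_piAntidiag.1 hk).1
    calc multinomial univ k * m ! ^ ℓ ≤ multinomial univ k * ∏ i, (k i)! := by
          gcongr
          simpa using factorial_pow_card_le_prod_factorial (s := univ) (k := k) (m := m) (by simpa)
      _ = (ℓ * m)! := by rw [mul_comm, multinomial_spec, hsum]
  have hcard : #A ≤ (ℓ * m + 1) ^ ℓ := by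
    calc #A ≤ #(Fintype.piFinset fun _ : Fin ℓ => range (ℓ * m + 1)) := by
          refine card_le_card fun k hk => Fintype.mem_piFinset.2 fun i => mem_range.2 ?_
          exact Nat.lt_succ_of_le ((mem_piAntidiag.1 hk).1 ▸ single_le_sum (by simp) (mem_univ i))
      _ = (ℓ * m + 1) ^ ℓ := by simp
  calc ℓ ^ (ℓ * m) * m ! ^ ℓ = ∑ k ∈ A, multinomial univ k * m ! ^ ℓ := by
        rw [hmultinomial, sum_mul]
    _ ≤ ∑ _k ∈ A, (ℓ * m)! := sum_le_sum hterm
    _ = #A * (ℓ * m)! := by rw [sum_const, smul_eq_mul]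
    _ ≤ (ℓ * m + 1) ^ ℓ * (ℓ * m)! := by gcongr

lemma card_image_fst_comp_mul_factorial_pow {α ι κ : Type*} [Fintype α] [Fintype ι] [Fintype κ]
    [DecidableEq α] [DecidableEq ι] [DecidableEq κ] (e₀ : α ≃ ι × κ) :
    #(univ.image fun e : α ≃ ι × κ => Prod.fst ∘ e) * (Fintype.card κ)! ^ Fintype.card ι =
      (Fintype.card α)! := by
  have hblock (i : ι) : Fintype.card {a : ι × κ // a.1 = i} = Fintype.card κ :=
    Fintype.card_congr ⟨fun a => a.1.2, fun b => ⟨(i, b), rfl⟩, by rintro ⟨⟨j, b⟩, rfl⟩; rfl,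
      fun _ => rfl⟩
  have hfiber : ∀ p ∈ univ.image fun e : α ≃ ι × κ => Prod.fst ∘ e,
      #{e : α ≃ ι × κ | Prod.fst ∘ e = p} = (Fintype.card κ)! ^ Fintype.card ι := by
    intro p hp
    obtain ⟨e₁, -, rfl⟩ := mem_image.1 hp
    have hcongr : {e : α ≃ ι × κ // Prod.fst ∘ e = Prod.fst ∘ e₁} ≃
        {g : Equiv.Perm (ι × κ) // Prod.fst ∘ g = Prod.fst} :=
      (e₁.equivCongr (Equiv.refl _)).subtypeEquiv fun e => by
        constructor
        · intro h
          funext x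
          simpa using congrFun h (e₁.symm x)
        · intro h
          funext a
          simpa using congrFun h (e₁ a)
    rw [← Fintype.card_subtype, Fintype.card_congr hcongr, DomMulAct.stabilizer_card]
    simp [hblock]
  calc _ = ∑ p ∈ univ.image fun e : α ≃ ι × κ => Prod.fst ∘ e,
        #{e : α ≃ ι × κ | Prod.fst ∘ e = p} := by rw [sum_congr rfl hfiber, sum_const, smul_eq_mul]
    _ = #(univ : Finset (α ≃ ι × κ)) := (card_eq_sum_card_image _ _).symm
    _ = (Fintype.card α)! := by rw [Finset.card_univ, Fintype.card_equiv e₀]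

end Counting

lemma card_image_fst_comp_mul_indepNum_le {ι : Type*} [Fintype ι] [DecidableEq ι]
    {V : ι → Type*} [∀ i, Fintype (V i)] (G : ∀ i, SimpleGraph (V i)) (N m : ℕ) :
    #(univ.image fun e : Fin N ≃ ι × Fin m => Prod.fst ∘ e) *
        indepNum (strongPow (piStrongProd G) m) ≤
      indepNum (strongPow (sigmaUnion G) N) := by
  set P := univ.image fun e : Fin N ≃ ι × Fin m => Prod.fst ∘ e
  have hP (p : P) : ∃ e : Fin N ≃ ι × Fin m, Prod.fst ∘ e = p := by
    obtain ⟨e, -, he⟩ := mem_image.1 p.2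
    exact ⟨e, he⟩
  choose e he using hP
  calc #P * indepNum (strongPow (piStrongProd G) m)
      ≤ indepNum (⊥ : SimpleGraph P) * indepNum (strongPow (piStrongProd G) m) := by
        gcongr
        simpa using card_le_indepNum_bot P
    _ ≤ indepNum (strongProd ⊥ (strongPow (piStrongProd G) m)) :=
      indepNum_mul_le_indepNum_strongProd _ _
    _ ≤ indepNum (strongPow (sigmaUnion G) N) := by
      refine indepNum_le_of_reflect
        (fun px t => ⟨(e px.1 t).1, px.2 (e px.1 t).2 (e px.1 t).1⟩) ?_
      rintro ⟨p, x⟩ ⟨q, y⟩ h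
      rw [eq_or_strongPow_adj_iff] at h
      obtain rfl : p = q := Subtype.ext <| funext fun t => by
        rw [← he p, ← he q]
        exact fst_eq_of_eq_or_sigmaUnion_adj (h t)
      refine (eq_or_strongProd_adj_iff _ _).2 ⟨Or.inl rfl, (eq_or_strongPow_adj_iff _ _).2
        fun s => (eq_or_piStrongProd_adj_iff G).2 fun i => ?_⟩
      have hcoord := h ((e p).symm (i, s))
      rw [Equiv.apply_symm_apply] at hcoord
      exact eq_or_adj_of_eq_or_sigmaUnion_adj hcoord

lemma pow_mul_indepNum_le (ℓ m : ℕ) {V : Fin ℓ → Type*} [∀ i, Fintype (V i)]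
    (G : ∀ i, SimpleGraph (V i)) :
    ℓ ^ (ℓ * m) * indepNum (strongPow (piStrongProd G) m) ≤
      (ℓ * m + 1) ^ ℓ * indepNum (strongPow (sigmaUnion G) (ℓ * m)) := by
  set P := univ.image fun e : Fin (ℓ * m) ≃ Fin ℓ × Fin m => Prod.fst ∘ e
  have hP : #P * m.factorial ^ ℓ = (ℓ * m).factorial := by
    simpa using card_image_fst_comp_mul_factorial_pow finProdFinEquiv.symm
  have hcount : ℓ ^ (ℓ * m) ≤ (ℓ * m + 1) ^ ℓ * #P := by
    refine Nat.le_of_mul_le_mul_right ?_ (pow_pos (Nat.factorial_pos m) ℓ)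
    rw [mul_assoc, hP]
    exact pow_mul_factorial_pow_le ℓ m
  calc ℓ ^ (ℓ * m) * indepNum (strongPow (piStrongProd G) m)
      ≤ (ℓ * m + 1) ^ ℓ * (#P * indepNum (strongPow (piStrongProd G) m)) := by
        rw [← mul_assoc]
        gcongr
    _ ≤ (ℓ * m + 1) ^ ℓ * indepNum (strongPow (sigmaUnion G) (ℓ * m)) := by
        gcongr
        exact card_image_fst_comp_mul_indepNum_le G (ℓ * m) m

theorem capacity_strong_product_le_general (ℓ : ℕ) (V : Fin ℓ → Type*)
    [∀ i, Fintype (V i)] (G : ∀ i, SimpleGraph (V i)) :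
    shannonCapacity (piStrongProd G) ≤ (shannonCapacity (sigmaUnion G) / ℓ) ^ ℓ := by
  set Θ := shannonCapacity (sigmaUnion G)
  have hΘ : 0 ≤ Θ := shannonCapacity_nonneg _
  refine shannonCapacity_le_of_eventually_indepNum_le _ (C := (ℓ + 1 : ℝ) ^ ℓ) (k := ℓ)
    (by positivity) ?_
  filter_upwards [eventually_ge_atTop 1] with m hm
  have hcount : (ℓ : ℝ) ^ (ℓ * m) * indepNum (strongPow (piStrongProd G) m) ≤
      (ℓ * m + 1) ^ ℓ * Θ ^ (ℓ * m) := by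
    calc _ ≤ (((ℓ * m + 1) ^ ℓ * indepNum (strongPow (sigmaUnion G) (ℓ * m)) : ℕ) : ℝ) := by
          exact_mod_cast pow_mul_indepNum_le ℓ m G
      _ ≤ _ := by
          push_cast
          gcongr
          exact indepNum_strongPow_le_shannonCapacity_pow _ _
  have hlinear : (ℓ * m + 1 : ℝ) ≤ (ℓ + 1) * m := by
    have : (1 : ℝ) ≤ m := by exact_mod_cast hm
    nlinarith
  have hpos : (0 : ℝ) < (ℓ : ℝ) ^ (ℓ * m) := by
    rcases ℓ.eq_zero_or_pos with rfl | hℓ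
    · simp
    · positivity
  rw [← pow_mul, div_pow, mul_div_assoc', le_div_iff₀ hpos, mul_comm]
  calc _ ≤ (ℓ * m + 1 : ℝ) ^ ℓ * Θ ^ (ℓ * m) := hcount
    _ ≤ ((ℓ + 1) * m) ^ ℓ * Θ ^ (ℓ * m) := by gcongr
    _ = _ := by rw [mul_pow]

theorem capacity_strong_product_le (ℓ : ℕ) (hℓ : 1 ≤ ℓ) (V : Fin ℓ → Type*)
    [∀ i, Fintype (V i)] (G : ∀ i, SimpleGraph (V i)) :
    shannonCapacity (piStrongProd G) ≤ (shannonCapacity (sigmaUnion G) / ℓ) ^ ℓ :=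
  capacity_strong_product_le_general ℓ V G

end Paper
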